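/- arXiv:math/0408278 — 3 statements merged into one kernel-verified Lean document; each statement's English description precedes it below -/
import Mathlib

section
/- Let φ ∈ S(ℝ^n) and let (x_ε)_{ε∈(0,1]} be a moderate net of points of ℝ^n. Then: (a) the net (y ↦ φ_ε(x_ε − y))_ε is S-moderate; (b) if (x'_ε)_{ε∈(0,1]} is another moderate net of points with |x_ε − x'_ε| = O(ε^q) as ε → 0 for every q ∈ ℕ, then the net (y ↦ φ_ε(x_ε − y) − φ_ε(x'_ε − y))_ε is S-negligible. -/
open MeasureTheory
open scoped ENNReal

noncomputable section

/-- `P ε` holds for all sufficiently small `ε ∈ (0,1]`. -/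
def EvSmall (P : ℝ → Prop) : Prop :=
  ∃ η : ℝ, 0 < η ∧ η ≤ 1 ∧ ∀ ε : ℝ, 0 < ε → ε ≤ η → P ε

/-- Partial derivative in the `i`-th coordinate direction. -/
def pd {n : ℕ} (i : Fin n) (f : (Fin n → ℝ) → ℂ) : (Fin n → ℝ) → ℂ :=
  fun x => fderiv ℝ f x (Pi.single i 1)

/-- Multi-index partial derivative `∂^β`. -/
def pdm {n : ℕ} (β : Fin n → ℕ) (f : (Fin n → ℝ) → ℂ) : (Fin n → ℝ) → ℂ :=
  (List.finRange n).foldr (fun i g => (pd i)^[β i] g) f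

/-- The monomial `x^α`. -/
def monom {n : ℕ} (α : Fin n → ℕ) (x : Fin n → ℝ) : ℝ := ∏ i, (x i) ^ (α i)

/-- A net of (smooth) functions on `ℝ^n` is S-moderate if for all multi-indices `α, β`
there is `N` with `sup_x |x^α ∂^β u_ε(x)| = O(ε^{-N})` as `ε → 0`. -/
def SMod {n : ℕ} (u : ℝ → (Fin n → ℝ) → ℂ) : Prop :=
  ∀ α β : Fin n → ℕ, ∃ N : ℕ, ∃ C : ℝ, EvSmall fun ε =>
    ∀ x, |monom α x| * ‖pdm β (u ε) x‖ ≤ C * ε ^ (-(N : ℤ))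

/-- A net of (smooth) functions on `ℝ^n` is S-negligible if for all multi-indices `α, β`
and every `q ∈ ℕ`, `sup_x |x^α ∂^β u_ε(x)| = O(ε^q)` as `ε → 0`. -/
def SNeg {n : ℕ} (u : ℝ → (Fin n → ℝ) → ℂ) : Prop :=
  ∀ α β : Fin n → ℕ, ∀ q : ℕ, ∃ C : ℝ, EvSmall fun ε =>
    ∀ x, |monom α x| * ‖pdm β (u ε) x‖ ≤ C * ε ^ q

/-- A moderate net of points of `ℝ^n`: `|x_ε| = O(ε^{-N})` for some `N`. -/
def PtMod {n : ℕ} (x : ℝ → Fin n → ℝ) : Prop :=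
  ∃ N : ℕ, ∃ C : ℝ, EvSmall fun ε => ‖x ε‖ ≤ C * ε ^ (-(N : ℤ))

/-!
Differentiating `y ↦ ε⁻ⁿ φ(ε⁻¹ (a - y))` only produces the factor `(-ε⁻¹) ^ |β|` and replaces
`φ` by `∂^β φ`, again a Schwartz function. With `z = ε⁻¹ (x_ε - y)` and `ε ≤ 1` one has
`|y^α| ≤ (1 + |x_ε|) ^ |α| (1 + |z|) ^ |α|`; the factor in `z` is absorbed by the decay of
`∂^β φ`, leaving a power of `ε⁻¹` times a power of `1 + |x_ε|`, which is moderate.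
For the difference, the mean value theorem together with Peetre's inequality
`1 + |z| ≤ (1 + |w|) (1 + |z - w|)` bounds the weighted difference by a moderate factor times
`|z - z'| = ε⁻¹ |x_ε - x'_ε|`, which is negligible.
-/

open Filter Topology Asymptotics LineDeriv
open scoped ContDiff SchwartzMap

section PartialDerivatives

variable {n : ℕ} {f g : (Fin n → ℝ) → ℂ}

def multiIndexList (β : Fin n → ℕ) : List (Fin n) :=
  (List.finRange n).flatMap fun i => List.replicate (β i) i

theorem length_multiIndexList (β : Fin n → ℕ) : (multiIndexList β).length = ∑ i, β i := by
  simp [multiIndexList, List.length_flatMap, Fin.sum_univ_def]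

theorem pdm_eq_foldr_pd (β : Fin n → ℕ) :
    pdm β f = (multiIndexList β).foldr pd f := by
  have iterate_eq (i : Fin n) (k : ℕ) (g : (Fin n → ℝ) → ℂ) :
      (pd i)^[k] g = (List.replicate k i).foldr pd g := by
    induction k with
    | zero => rfl
    | succ k ih => rw [Function.iterate_succ_apply', ih, List.replicate_succ, List.foldr_cons]
  unfold pdm multiIndexList
  induction List.finRange n with
  | nil => rfl
  | cons i l ih => rw [List.foldr_cons, ih, iterate_eq, List.flatMap_cons, List.foldr_append]

theorem contDiff_pd (hf : ContDiff ℝ ∞ f) (i : Fin n) :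
    ContDiff ℝ ∞ (pd i f) :=
  (hf.fderiv_right le_rfl).clm_apply contDiff_const

theorem contDiff_foldr_pd (l : List (Fin n)) (hf : ContDiff ℝ ∞ f) :
    ContDiff ℝ ∞ (l.foldr pd f) := by
  induction l with
  | nil => exact hf
  | cons i l ih => exact contDiff_pd ih i

theorem contDiff_pdm (hf : ContDiff ℝ ∞ f) (β : Fin n → ℕ) : ContDiff ℝ ∞ (pdm β f) :=
  pdm_eq_foldr_pd β ▸ contDiff_foldr_pd _ hf

theorem pd_sub (hf : Differentiable ℝ f) (hg : Differentiable ℝ g)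
    (i : Fin n) : pd i (f - g) = pd i f - pd i g := by
  funext y
  simp [pd, fderiv_sub (hf y) (hg y)]

theorem pdm_sub (hf : ContDiff ℝ ∞ f) (hg : ContDiff ℝ ∞ g)
    (β : Fin n → ℕ) : pdm β (f - g) = pdm β f - pdm β g := by
  simp only [pdm_eq_foldr_pd]
  induction multiIndexList β with
  | nil => rfl
  | cons i l ih =>
    rw [List.foldr_cons, ih, pd_sub ((contDiff_foldr_pd l hf).differentiable (by simp))
      ((contDiff_foldr_pd l hg).differentiable (by simp))]
    rfl

theorem pd_smul_comp (hf : Differentiable ℝ f) (c r : ℝ)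
    (a : Fin n → ℝ) (i : Fin n) :
    pd i (fun y => c • f (r • (a - y))) = fun y => (-r * c) • pd i f (r • (a - y)) := by
  funext y
  have hL : HasFDerivAt (fun y : Fin n → ℝ => r • (a - y))
      (-(r • ContinuousLinearMap.id ℝ (Fin n → ℝ))) y := by
    simpa [smul_sub] using ((hasFDerivAt_id (𝕜 := ℝ) y).const_smul r).const_sub (r • a)
  have h : HasFDerivAt (fun y => c • f (r • (a - y)))
      (c • (fderiv ℝ f (r • (a - y))).comp (-(r • ContinuousLinearMap.id ℝ (Fin n → ℝ)))) y :=
    ((hf _).hasFDerivAt.comp y hL).const_smul c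
  simp only [pd, h.fderiv]
  simp [smul_smul, mul_comm c]

theorem pdm_smul_comp (hf : ContDiff ℝ ∞ f) (β : Fin n → ℕ)
    (c r : ℝ) (a : Fin n → ℝ) :
    pdm β (fun y => c • f (r • (a - y))) =
      fun y => ((-r) ^ (∑ i, β i) * c) • pdm β f (r • (a - y)) := by
  simp only [pdm_eq_foldr_pd, ← length_multiIndexList]
  induction multiIndexList β generalizing c with
  | nil => simp
  | cons i l ih =>
    rw [List.foldr_cons, ih, pd_smul_comp ((contDiff_foldr_pd l hf).differentiable (by simp))]
    simp only [List.foldr_cons, List.length_cons, pow_succ]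
    ring_nf

theorem SchwartzMap.exists_coe_eq_pdm (ψ : 𝓢(Fin n → ℝ, ℂ)) (β : Fin n → ℕ) :
    ∃ ψ' : 𝓢(Fin n → ℝ, ℂ), ⇑ψ' = pdm β ψ := by
  rw [pdm_eq_foldr_pd]
  induction multiIndexList β with
  | nil => exact ⟨ψ, rfl⟩
  | cons i l ih =>
    obtain ⟨ψ', hψ'⟩ := ih
    exact ⟨∂_{(Pi.single i 1 : Fin n → ℝ)} ψ', by rw [List.foldr_cons, ← hψ']; rfl⟩

end PartialDerivatives

theorem SchwartzMap.exists_one_add_norm_pow_mul_le {E F : Type*} [NormedAddCommGroup E]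
    [NormedSpace ℝ E] [NormedAddCommGroup F] [NormedSpace ℝ F] (ψ : 𝓢(E, F)) (k : ℕ) :
    ∃ C, ∀ z, (1 + ‖z‖) ^ k * ‖ψ z‖ ≤ C :=
  ⟨_, fun z => by
    simpa using one_add_le_sup_seminorm_apply (𝕜 := ℝ) (m := (k, 0)) le_rfl le_rfl ψ z⟩

theorem SchwartzMap.exists_one_add_norm_pow_mul_fderiv_le {E F : Type*} [NormedAddCommGroup E]
    [NormedSpace ℝ E] [NormedAddCommGroup F] [NormedSpace ℝ F] (ψ : 𝓢(E, F)) (k : ℕ) :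
    ∃ C, ∀ z, (1 + ‖z‖) ^ k * ‖fderiv ℝ ψ z‖ ≤ C :=
  (fderivCLM ℝ E F ψ).exists_one_add_norm_pow_mul_le k

theorem one_add_norm_pow_mul_norm_sub_le {E F : Type*} [NormedAddCommGroup E]
    [NormedSpace ℝ E] [NormedAddCommGroup F] [NormedSpace ℝ F] {f : E → F}
    (hf : Differentiable ℝ f) {k : ℕ} {C : ℝ} (hC : ∀ w, (1 + ‖w‖) ^ k * ‖fderiv ℝ f w‖ ≤ C)
    (z z' : E) : (1 + ‖z‖) ^ k * ‖f z - f z'‖ ≤ C * (1 + ‖z - z'‖) ^ k * ‖z - z'‖ := by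
  have hbound : ∀ w ∈ segment ℝ z' z,
      ‖fderiv ℝ f w‖ ≤ C * (1 + ‖z - z'‖) ^ k / (1 + ‖z‖) ^ k := by
    intro w hw
    have hzw : ‖z - w‖ ≤ ‖z - z'‖ := by
      have := dist_add_dist_of_mem_segment hw
      rw [dist_comm w z, dist_comm z' z] at this
      simp only [dist_eq_norm] at this
      linarith [norm_nonneg (z' - w)]
    have hweight : 1 + ‖z‖ ≤ (1 + ‖w‖) * (1 + ‖z - z'‖) := by
      have := norm_le_insert' z w
      nlinarith [norm_nonneg w, norm_nonneg (z - z')]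
    rw [le_div_iff₀ (by positivity)]
    calc ‖fderiv ℝ f w‖ * (1 + ‖z‖) ^ k
        ≤ ‖fderiv ℝ f w‖ * ((1 + ‖w‖) * (1 + ‖z - z'‖)) ^ k := by gcongr
      _ = (1 + ‖w‖) ^ k * ‖fderiv ℝ f w‖ * (1 + ‖z - z'‖) ^ k := by rw [mul_pow]; ring
      _ ≤ C * (1 + ‖z - z'‖) ^ k := by gcongr; exact hC w
  have hmvt := (convex_segment z' z).norm_image_sub_le_of_norm_fderiv_le (fun w _ => hf w)
    hbound (left_mem_segment ℝ z' z) (right_mem_segment ℝ z' z)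
  rw [div_mul_eq_mul_div, le_div_iff₀ (by positivity)] at hmvt
  linarith

theorem abs_monom_le {n : ℕ} (α : Fin n → ℕ) (y : Fin n → ℝ) :
    |monom α y| ≤ ‖y‖ ^ ∑ i, α i := by
  rw [monom, Finset.abs_prod, ← Finset.prod_pow_eq_pow_sum]
  gcongr with i
  rw [abs_pow]
  gcongr
  exact norm_le_pi_norm y i

theorem abs_monom_le_of_dilate {n : ℕ} (α : Fin n → ℕ) {ε : ℝ} (hε : 0 < ε) (hε1 : ε ≤ 1)
    (a y : Fin n → ℝ) :
    |monom α y| ≤ (1 + ‖a‖) ^ (∑ i, α i) * (1 + ‖ε⁻¹ • (a - y)‖) ^ (∑ i, α i) := by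
  have hay : ‖a - y‖ ≤ ‖ε⁻¹ • (a - y)‖ := by
    rw [norm_smul, Real.norm_eq_abs, abs_inv, abs_of_pos hε]
    exact le_mul_of_one_le_left (norm_nonneg _) ((one_le_inv₀ hε).2 hε1)
  have hy : ‖y‖ ≤ (1 + ‖a‖) * (1 + ‖ε⁻¹ • (a - y)‖) := by
    have := norm_le_insert' y a
    rw [norm_sub_rev] at this
    nlinarith [norm_nonneg a, norm_nonneg (ε⁻¹ • (a - y))]
  rw [← mul_pow]
  exact (abs_monom_le α y).trans (by gcongr)

section DilatedReflections

variable {n : ℕ} {f : (Fin n → ℝ) → ℂ}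

theorem contDiff_smul_comp_dilate (hf : ContDiff ℝ ∞ f) (c r : ℝ) (a : Fin n → ℝ) :
    ContDiff ℝ ∞ (fun y => c • f (r • (a - y))) :=
  (hf.comp ((contDiff_const.sub contDiff_id).const_smul r)).const_smul c

theorem norm_neg_inv_pow_mul_inv_pow {ε : ℝ} (hε : 0 < ε) (k : ℕ) :
    ‖(-ε⁻¹) ^ k * (ε ^ n)⁻¹‖ = ε ^ (-(n + k : ℤ)) := by
  rw [norm_mul, norm_pow, norm_neg, norm_inv, norm_inv, norm_pow, Real.norm_of_nonneg hε.le,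
    zpow_neg, zpow_add₀ hε.ne', zpow_natCast, zpow_natCast, mul_inv, inv_pow, mul_comm]

theorem abs_monom_mul_norm_pdm_dilate_le (hf : ContDiff ℝ ∞ f) (α β : Fin n → ℕ) {C : ℝ}
    (hC : ∀ z, (1 + ‖z‖) ^ (∑ i, α i) * ‖pdm β f z‖ ≤ C) {ε : ℝ} (hε : 0 < ε) (hε1 : ε ≤ 1)
    (a y : Fin n → ℝ) :
    |monom α y| * ‖pdm β (fun y => (ε ^ n)⁻¹ • f (ε⁻¹ • (a - y))) y‖ ≤
      ε ^ (-(n + ∑ i, β i : ℤ)) * (1 + ‖a‖) ^ (∑ i, α i) * C := by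
  set z := ε⁻¹ • (a - y)
  rw [pdm_smul_comp hf, norm_smul, norm_neg_inv_pow_mul_inv_pow hε]
  calc |monom α y| * (ε ^ (-(n + ∑ i, β i : ℤ)) * ‖pdm β f z‖)
      ≤ (1 + ‖a‖) ^ (∑ i, α i) * (1 + ‖z‖) ^ (∑ i, α i) *
          (ε ^ (-(n + ∑ i, β i : ℤ)) * ‖pdm β f z‖) := by
        gcongr
        exact abs_monom_le_of_dilate α hε hε1 a y
    _ = ε ^ (-(n + ∑ i, β i : ℤ)) * (1 + ‖a‖) ^ (∑ i, α i) *
          ((1 + ‖z‖) ^ (∑ i, α i) * ‖pdm β f z‖) := by ring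
    _ ≤ ε ^ (-(n + ∑ i, β i : ℤ)) * (1 + ‖a‖) ^ (∑ i, α i) * C := by gcongr; exact hC z

theorem abs_monom_mul_norm_pdm_dilate_sub_le (hf : ContDiff ℝ ∞ f) (α β : Fin n → ℕ) {C : ℝ}
    (hC : ∀ w, (1 + ‖w‖) ^ (∑ i, α i) * ‖fderiv ℝ (pdm β f) w‖ ≤ C) {ε : ℝ} (hε : 0 < ε)
    (hε1 : ε ≤ 1) (a b y : Fin n → ℝ) :
    |monom α y| * ‖pdm β (fun y => (ε ^ n)⁻¹ • f (ε⁻¹ • (a - y)) -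
        (ε ^ n)⁻¹ • f (ε⁻¹ • (b - y))) y‖ ≤
      ε ^ (-(n + ∑ i, β i : ℤ)) * (1 + ‖a‖) ^ (∑ i, α i) *
        (C * (1 + ε⁻¹ * ‖a - b‖) ^ (∑ i, α i) * (ε⁻¹ * ‖a - b‖)) := by
  set z := ε⁻¹ • (a - y)
  set z' := ε⁻¹ • (b - y)
  have hzz' : ‖z - z'‖ = ε⁻¹ * ‖a - b‖ := by
    rw [← smul_sub, sub_sub_sub_cancel_right, norm_smul, Real.norm_of_nonneg (by positivity)]
  have hmvt := one_add_norm_pow_mul_norm_sub_le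
    ((contDiff_pdm hf β).differentiable (by simp)) hC z z'
  rw [hzz'] at hmvt
  change |monom α y| * ‖pdm β ((fun y => (ε ^ n)⁻¹ • f (ε⁻¹ • (a - y))) -
    (fun y => (ε ^ n)⁻¹ • f (ε⁻¹ • (b - y)))) y‖ ≤ _
  rw [pdm_sub (contDiff_smul_comp_dilate hf _ _ a) (contDiff_smul_comp_dilate hf _ _ b),
    pdm_smul_comp hf, pdm_smul_comp hf, Pi.sub_apply, ← smul_sub, norm_smul,
    norm_neg_inv_pow_mul_inv_pow hε]
  calc |monom α y| * (ε ^ (-(n + ∑ i, β i : ℤ)) * ‖pdm β f z - pdm β f z'‖)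
      ≤ (1 + ‖a‖) ^ (∑ i, α i) * (1 + ‖z‖) ^ (∑ i, α i) *
          (ε ^ (-(n + ∑ i, β i : ℤ)) * ‖pdm β f z - pdm β f z'‖) := by
        gcongr
        exact abs_monom_le_of_dilate α hε hε1 a y
    _ = ε ^ (-(n + ∑ i, β i : ℤ)) * (1 + ‖a‖) ^ (∑ i, α i) *
          ((1 + ‖z‖) ^ (∑ i, α i) * ‖pdm β f z - pdm β f z'‖) := by ring
    _ ≤ _ := by gcongr

end DilatedReflections

theorem evSmall_iff_eventually {P : ℝ → Prop} : EvSmall P ↔ ∀ᶠ ε in 𝓝[>] 0, P ε := by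
  constructor
  · rintro ⟨η, hη, -, hP⟩
    filter_upwards [Ioc_mem_nhdsGT hη] with ε hε using hP ε hε.1 hε.2
  · intro h
    obtain ⟨η, hη, hP⟩ := (nhdsGT_basis (0 : ℝ)).eventually_iff.1 h
    refine ⟨min (η / 2) 1, by positivity, min_le_right _ _, fun ε hε hεη => hP ⟨hε, ?_⟩⟩
    linarith [min_le_left (η / 2) 1]

theorem isBigO_zpow_of_evSmall {E : Type*} [Norm E] {f : ℝ → E} {C : ℝ} {k : ℤ}
    (h : EvSmall fun ε => ‖f ε‖ ≤ C * ε ^ k) : f =O[𝓝[>] 0] fun ε => ε ^ k := by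
  refine IsBigO.of_bound C ?_
  filter_upwards [evSmall_iff_eventually.1 h, self_mem_nhdsWithin] with ε hε (hε0 : 0 < ε)
  rwa [Real.norm_of_nonneg (zpow_nonneg hε0.le k)]

theorem exists_evSmall_of_isBigO {ι : Type*} {F : ℝ → ι → ℝ} {g : ℝ → ℝ} {k : ℤ}
    (hg : g =O[𝓝[>] 0] fun ε => ε ^ k) (hF : ∀ᶠ ε in 𝓝[>] 0, ∀ y, F ε y ≤ g ε) :
    ∃ C, EvSmall fun ε => ∀ y, F ε y ≤ C * ε ^ k := by
  obtain ⟨C, hC⟩ := hg.bound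
  refine ⟨C, evSmall_iff_eventually.2 ?_⟩
  filter_upwards [hF, hC, self_mem_nhdsWithin] with ε hF hC (hε : 0 < ε) y
  rw [Real.norm_of_nonneg (zpow_nonneg hε.le k)] at hC
  exact (hF y).trans ((le_abs_self _).trans hC)

theorem isBigO_zpow_of_le {a b : ℤ} (h : a ≤ b) :
    (fun ε : ℝ => ε ^ b) =O[𝓝[>] 0] fun ε => ε ^ a := by
  refine IsBigO.of_bound 1 ?_
  filter_upwards [Ioc_mem_nhdsGT one_pos] with ε ⟨hε, hε1⟩
  rw [Real.norm_of_nonneg (zpow_nonneg hε.le b), Real.norm_of_nonneg (zpow_nonneg hε.le a),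
    one_mul]
  exact zpow_le_zpow_right_of_le_one₀ hε hε1 h

theorem isBigO_one_zpow_of_nonpos {a : ℤ} (h : a ≤ 0) :
    (fun _ : ℝ => (1 : ℝ)) =O[𝓝[>] 0] fun ε => ε ^ a :=
  (isBigO_zpow_of_le h).congr_left zpow_zero

theorem Asymptotics.IsBigO.mul_zpow_add {f g : ℝ → ℝ} {a b : ℤ} (hf : f =O[𝓝[>] 0] fun ε => ε ^ a)
    (hg : g =O[𝓝[>] 0] fun ε => ε ^ b) :
    (fun ε => f ε * g ε) =O[𝓝[>] 0] fun ε => ε ^ (a + b) :=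
  (hf.mul hg).congr' EventuallyEq.rfl <| eventually_mem_nhdsWithin.mono fun _ hε =>
    (zpow_add₀ (ne_of_gt hε) a b).symm

theorem Asymptotics.IsBigO.pow_zpow_mul {f : ℝ → ℝ} {a : ℤ} (hf : f =O[𝓝[>] 0] fun ε => ε ^ a)
    (k : ℕ) :
    (fun ε => f ε ^ k) =O[𝓝[>] 0] fun ε => ε ^ (a * k) :=
  (hf.pow k).congr_right fun ε => by rw [zpow_mul, zpow_natCast]

theorem PtMod.isBigO_one_add_norm {n : ℕ} {x : ℝ → Fin n → ℝ} (hx : PtMod x) :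
    ∃ N : ℕ, (fun ε => 1 + ‖x ε‖) =O[𝓝[>] 0] fun ε => ε ^ (-(N : ℤ)) := by
  obtain ⟨N, C, hC⟩ := hx
  exact ⟨N, (isBigO_one_zpow_of_nonpos (by simp)).add (isBigO_zpow_of_evSmall hC).norm_left⟩


theorem sMod_dilate_of_ptMod {n : ℕ} (φ : 𝓢(Fin n → ℝ, ℂ)) {x : ℝ → Fin n → ℝ}
    (hx : PtMod x) : SMod (fun ε y => (ε ^ n : ℝ)⁻¹ • φ (ε⁻¹ • (x ε - y))) := by
  intro α β
  obtain ⟨ψ, hψ⟩ := φ.exists_coe_eq_pdm β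
  obtain ⟨C, hC⟩ := ψ.exists_one_add_norm_pow_mul_le (∑ i, α i)
  obtain ⟨N, hxN⟩ := hx.isBigO_one_add_norm
  have hg : (fun ε => C * (ε ^ (-(n + ∑ i, β i : ℤ)) * (1 + ‖x ε‖) ^ (∑ i, α i)))
      =O[𝓝[>] 0] fun ε => ε ^ (-((n + ∑ i, β i + N * ∑ i, α i : ℕ) : ℤ)) := by
    refine (((isBigO_refl _ _).mul_zpow_add (hxN.pow_zpow_mul _)).const_mul_left C).congr_right
      fun ε => ?_
    push_cast
    ring_nf
  refine ⟨_, exists_evSmall_of_isBigO hg ?_⟩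
  filter_upwards [Ioc_mem_nhdsGT one_pos] with ε ⟨hε, hε1⟩ y
  exact (abs_monom_mul_norm_pdm_dilate_le (φ.smooth ⊤) α β (hψ ▸ hC) hε hε1 (x ε) y).trans_eq
    (by ring)

theorem sNeg_dilate_sub_of_ptMod {n : ℕ} (φ : 𝓢(Fin n → ℝ, ℂ)) {x x' : ℝ → Fin n → ℝ}
    (hx : PtMod x) (hxx' : ∀ q : ℕ, ∃ C : ℝ, EvSmall fun ε => ‖x ε - x' ε‖ ≤ C * ε ^ q) :
    SNeg (fun ε y => (ε ^ n : ℝ)⁻¹ • φ (ε⁻¹ • (x ε - y)) -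
      (ε ^ n : ℝ)⁻¹ • φ (ε⁻¹ • (x' ε - y))) := by
  intro α β q
  obtain ⟨ψ, hψ⟩ := φ.exists_coe_eq_pdm β
  obtain ⟨C, hC⟩ := ψ.exists_one_add_norm_pow_mul_fderiv_le (∑ i, α i)
  obtain ⟨N, hxN⟩ := hx.isBigO_one_add_norm
  set K : ℕ := n + ∑ i, β i + N * ∑ i, α i
  -- `K` absorbs the moderate factors of the bound, the extra `1` the `ε⁻¹` in `z - z'`.
  obtain ⟨Cd, hCd⟩ := hxx' (q + K + 1)
  have hd : (fun ε => ε⁻¹ * ‖x ε - x' ε‖) =O[𝓝[>] 0] fun ε => ε ^ ((q + K : ℕ) : ℤ) := by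
    have hxx'K : EvSmall fun ε => ‖x ε - x' ε‖ ≤ Cd * ε ^ ((q + K + 1 : ℕ) : ℤ) := by
      simpa only [zpow_natCast] using hCd
    have h := (isBigO_refl (fun ε : ℝ => ε ^ (-1 : ℤ)) _).mul_zpow_add
      (isBigO_zpow_of_evSmall hxx'K).norm_left
    convert h using 3 with ε
    · rw [zpow_neg_one]
    · push_cast; ring
  have hd₀ : (fun ε => 1 + ε⁻¹ * ‖x ε - x' ε‖) =O[𝓝[>] 0] fun ε => ε ^ (0 : ℤ) :=
    (isBigO_one_zpow_of_nonpos le_rfl).add (hd.trans (isBigO_zpow_of_le (by omega)))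
  have hg : (fun ε => C * (ε ^ (-(n + ∑ i, β i : ℤ)) * (1 + ‖x ε‖) ^ (∑ i, α i) *
      ((1 + ε⁻¹ * ‖x ε - x' ε‖) ^ (∑ i, α i) * (ε⁻¹ * ‖x ε - x' ε‖))))
      =O[𝓝[>] 0] fun ε => ε ^ (q : ℤ) := by
    refine ((((isBigO_refl _ _).mul_zpow_add (hxN.pow_zpow_mul _)).mul_zpow_add
      ((hd₀.pow_zpow_mul _).mul_zpow_add hd)).const_mul_left C).congr_right fun ε => ?_
    push_cast [K]
    ring_nf
  obtain ⟨C', hC'⟩ := exists_evSmall_of_isBigO hg <| by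
    filter_upwards [Ioc_mem_nhdsGT one_pos] with ε ⟨hε, hε1⟩ y
    exact (abs_monom_mul_norm_pdm_dilate_sub_le (φ.smooth ⊤) α β (hψ ▸ hC) hε hε1
      (x ε) (x' ε) y).trans_eq (by ring)
  exact ⟨C', by simpa only [zpow_natCast] using hC'⟩

/-- (a) `(y ↦ φ_ε(x_ε − y))_ε` is S-moderate; (b) if `x'_ε` is another
moderate point net with `|x_ε − x'_ε| = O(ε^q)` for every `q`, the corresponding difference
net is S-negligible. -/
theorem stmt8 {n : ℕ} (φ : SchwartzMap (Fin n → ℝ) ℂ)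
    (x : ℝ → Fin n → ℝ) (hx : PtMod x) :
    SMod (fun ε y => (ε ^ n : ℝ)⁻¹ • φ (ε⁻¹ • (x ε - y))) ∧
    (∀ x' : ℝ → Fin n → ℝ, PtMod x' →
      (∀ q : ℕ, ∃ C : ℝ, EvSmall fun ε => ‖x ε - x' ε‖ ≤ C * ε ^ q) →
      SNeg (fun ε y => (ε ^ n : ℝ)⁻¹ • φ (ε⁻¹ • (x ε - y)) -
        (ε ^ n : ℝ)⁻¹ • φ (ε⁻¹ • (x' ε - y)))) :=
  ⟨sMod_dilate_of_ptMod φ hx, fun _ _ hxx' => sNeg_dilate_sub_of_ptMod φ hx hxx'⟩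
end
end

section
/- Let Ω ⊆ ℝ^n be open, K ⊆ Ω compact, ψ ∈ C_c^∞(Ω), and φ ∈ S(ℝ^n). Let (x_ε)_{ε∈(0,1]} and (x'_ε)_{ε∈(0,1]} be nets of points with x_ε, x'_ε ∈ K for all sufficiently small ε and with |x_ε − x'_ε| = O(ε^q) as ε → 0 for every q ∈ ℕ. Then the net (y ↦ ψ(y)(φ_ε(x_ε − y) − φ_ε(x'_ε − y)))_ε is negligible on Ω: for every compact K₁ ⊆ Ω, every multi-index α and every q ∈ ℕ, sup_{y∈K₁}|∂^α_y[ψ(y)(φ_ε(x_ε − y) − φ_ε(x'_ε − y))]| = O(ε^q) as ε → 0. -/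
open MeasureTheory
open scoped ENNReal

noncomputable section

open scoped ContDiff

namespace Stmt9Aux

variable {n : ℕ}

lemma le_infty (k : ℕ) : (k : WithTop ℕ∞) ≤ ((⊤ : ℕ∞) : WithTop ℕ∞) := by
  exact_mod_cast le_top

lemma lt_infty (k : ℕ) : (k : WithTop ℕ∞) < ((⊤ : ℕ∞) : WithTop ℕ∞) := by
  exact_mod_cast (WithTop.coe_lt_top (k : ℕ))

/-- Iterated `pd` along a list of directions. -/
def pdl (L : List (Fin n)) (f : (Fin n → ℝ) → ℂ) : (Fin n → ℝ) → ℂ := L.foldr pd f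

lemma foldr_replicate (i : Fin n) (k : ℕ) (f : (Fin n → ℝ) → ℂ) :
    (List.replicate k i).foldr pd f = (pd i)^[k] f := by
  induction k with
  | zero => rfl
  | succ k ih =>
      rw [List.replicate_succ, List.foldr_cons, ih]
      exact (Function.iterate_succ_apply' (pd i) k f).symm

/-- The list of directions associated to a multi-index. -/
def mlist (β : Fin n → ℕ) : List (Fin n) :=
  (List.finRange n).foldr (fun i l => List.replicate (β i) i ++ l) []

lemma pdm_eq_pdl (β : Fin n → ℕ) (f : (Fin n → ℝ) → ℂ) : pdm β f = pdl (mlist β) f := by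
  show (List.finRange n).foldr (fun i g => (pd i)^[β i] g) f
      = pdl ((List.finRange n).foldr (fun i l => List.replicate (β i) i ++ l) []) f
  induction (List.finRange n) with
  | nil => rfl
  | cons i l ih =>
      simp only [List.foldr_cons, ih, pdl, List.foldr_append, foldr_replicate]

lemma pdl_apply (f : (Fin n → ℝ) → ℂ) (hf : ContDiff ℝ (⊤ : ℕ∞) f) (L : List (Fin n)) (x : Fin n → ℝ) :
    pdl L f x = iteratedFDeriv ℝ L.length f x (fun j => Pi.single (L.get j) 1) := by
  induction L generalizing x with
  | nil => simp [pdl]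
  | cons i L ih =>
      have hdiff : Differentiable ℝ (iteratedFDeriv ℝ L.length f) :=
        hf.differentiable_iteratedFDeriv (lt_infty _)
      have hIH : pdl L f
          = fun x => iteratedFDeriv ℝ L.length f x (fun j => Pi.single (L.get j) 1) :=
        funext fun x => ih x
      show pd i (pdl L f) x = _
      rw [pd, hIH, fderiv_continuousMultilinear_apply_const_apply (hdiff x)]
      rfl

lemma norm_pdm_le (β : Fin n → ℕ) (f : (Fin n → ℝ) → ℂ) (hf : ContDiff ℝ (⊤ : ℕ∞) f)
    (x : Fin n → ℝ) :
    ‖pdm β f x‖ ≤ ‖iteratedFDeriv ℝ (mlist β).length f x‖ := by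
  rw [pdm_eq_pdl, pdl_apply f hf]
  have h := ContinuousMultilinearMap.le_opNorm
    (iteratedFDeriv ℝ (mlist β).length f x) (fun j => Pi.single ((mlist β).get j) 1)
  simpa [Pi.norm_single] using h

/-- Translation invariance of the iterated derivative. -/
lemma itF_comp_add {F : Type} [NormedAddCommGroup F] [NormedSpace ℝ F]
    {g : (Fin n → ℝ) → F} (hg : ContDiff ℝ (⊤ : ℕ∞) g) (c : Fin n → ℝ) (k : ℕ) :
    iteratedFDeriv ℝ k (fun z => g (z + c)) = fun y => iteratedFDeriv ℝ k g (y + c) := by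
  induction k with
  | zero => funext y; ext m; simp
  | succ k ih =>
      funext y
      ext m
      have hdiff : Differentiable ℝ (iteratedFDeriv ℝ k g) :=
        hg.differentiable_iteratedFDeriv (lt_infty _)
      have h1 : HasFDerivAt (fun z : Fin n → ℝ => z + c)
          (ContinuousLinearMap.id ℝ (Fin n → ℝ)) y := (hasFDerivAt_id y).add_const c
      have h2 : HasFDerivAt (fun yy : Fin n → ℝ => iteratedFDeriv ℝ k g (yy + c))
          (fderiv ℝ (iteratedFDeriv ℝ k g) (y + c)) y := by
        exact ((hdiff (y + c)).hasFDerivAt.comp y h1)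
      rw [iteratedFDeriv_succ_apply_left, iteratedFDeriv_succ_apply_left, ih, h2.fderiv]

/-- Mean value inequality for iterated derivatives. -/
lemma itF_lipschitz {F : Type} [NormedAddCommGroup F] [NormedSpace ℝ F]
    {g : (Fin n → ℝ) → F} (hg : ContDiff ℝ (⊤ : ℕ∞) g) (k : ℕ) {B : ℝ}
    (hB : ∀ w, ‖iteratedFDeriv ℝ (k + 1) g w‖ ≤ B) (u v : Fin n → ℝ) :
    ‖iteratedFDeriv ℝ k g u - iteratedFDeriv ℝ k g v‖ ≤ B * ‖u - v‖ := by
  have := Convex.norm_image_sub_le_of_norm_fderiv_le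
    (f := iteratedFDeriv ℝ k g)
    (fun w _ => (hg.differentiable_iteratedFDeriv (lt_infty _)) w)
    (fun w _ => by rw [norm_fderiv_iteratedFDeriv]; exact hB w)
    convex_univ (Set.mem_univ v) (Set.mem_univ u)
  simpa using this

end Stmt9Aux

open Stmt9Aux

/-- if `x_ε, x'_ε ∈ K` for small `ε` and `|x_ε − x'_ε| = O(ε^q)` for every
`q`, the net `y ↦ ψ(y)(φ_ε(x_ε − y) − φ_ε(x'_ε − y))` is negligible on `Ω`. -/
theorem stmt9 {n : ℕ} (Ω : Set (Fin n → ℝ)) (hΩ : IsOpen Ω)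
    (K : Set (Fin n → ℝ)) (hK : IsCompact K) (hKΩ : K ⊆ Ω)
    (ψ : (Fin n → ℝ) → ℝ) (hψ : ContDiff ℝ (⊤ : ℕ∞) ψ) (hψc : HasCompactSupport ψ)
    (hψΩ : tsupport ψ ⊆ Ω)
    (φ : SchwartzMap (Fin n → ℝ) ℂ)
    (x x' : ℝ → Fin n → ℝ)
    (hxK : EvSmall fun ε => x ε ∈ K) (hx'K : EvSmall fun ε => x' ε ∈ K)
    (hclose : ∀ q : ℕ, ∃ C : ℝ, EvSmall fun ε => ‖x ε - x' ε‖ ≤ C * ε ^ q) :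
    ∀ K₁ : Set (Fin n → ℝ), IsCompact K₁ → K₁ ⊆ Ω → ∀ α : Fin n → ℕ, ∀ q : ℕ,
      ∃ C : ℝ, EvSmall fun ε => ∀ y ∈ K₁,
        ‖pdm α (fun z => (ψ z : ℂ) * ((ε ^ n : ℝ)⁻¹ • φ (ε⁻¹ • (x ε - z)) -
            (ε ^ n : ℝ)⁻¹ • φ (ε⁻¹ • (x' ε - z)))) y‖ ≤ C * ε ^ q := by
  intro K₁ hK₁ hK₁Ω α q
  classical
  set m := (mlist α).length with hm
  have hψS : ContDiff ℝ (⊤ : ℕ∞) ψ := hψ.of_le (by simp)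
  have hψcS : ContDiff ℝ (⊤ : ℕ∞) (fun z => (ψ z : ℂ)) :=
    Complex.ofRealCLM.contDiff.comp hψS
  -- bounds on derivatives of ψ (as a complex valued function)
  have hψb : ∀ j : ℕ, ∃ Cj : ℝ, ∀ z, ‖iteratedFDeriv ℝ j (fun w => (ψ w : ℂ)) z‖ ≤ Cj := by
    intro j
    obtain ⟨Cj, hCj⟩ :=
      ((hψS.of_le (le_infty j)).continuous_iteratedFDeriv le_rfl).bounded_above_of_compact_support
        (hψc.iteratedFDeriv j)
    refine ⟨Cj, fun z => ?_⟩
    have : ‖iteratedFDeriv ℝ j (⇑Complex.ofRealLI ∘ ψ) z‖ = ‖iteratedFDeriv ℝ j ψ z‖ :=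
      Complex.ofRealLI.norm_iteratedFDeriv_comp_left (x := z) hψS.contDiffAt (le_infty j)
    calc ‖iteratedFDeriv ℝ j (fun w => (ψ w : ℂ)) z‖
        = ‖iteratedFDeriv ℝ j ψ z‖ := this
      _ ≤ Cj := hCj z
  choose Cψ hCψ using hψb
  -- bounds on derivatives of φ
  have hφb : ∀ k : ℕ, ∃ C : ℝ, 0 < C ∧ ∀ w, ‖iteratedFDeriv ℝ k (⇑φ) w‖ ≤ C := by
    intro k
    obtain ⟨C, hC0, hC⟩ := φ.decay 0 k
    exact ⟨C, hC0, fun w => by simpa using hC w⟩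
  choose Cφ hCφ0 hCφ using hφb
  obtain ⟨C', η, hη0, hη1, hC'⟩ := hclose (q + n + m + 1)
  refine ⟨∑ j ∈ Finset.range (m + 1), (m.choose j : ℝ) * Cψ j * (Cφ (m - j + 1) * C'),
    η, hη0, hη1, ?_⟩
  intro ε hε0 hεη y _
  have hε1 : ε ≤ 1 := hεη.trans hη1
  have hεne : ε ≠ 0 := ne_of_gt hε0
  have hδ : ‖x ε - x' ε‖ ≤ C' * ε ^ (q + n + m + 1) := hC' ε hε0 hεη
  have hC'0 : 0 ≤ C' := by
    have h1 : (0:ℝ) ≤ C' * ε ^ (q + n + m + 1) := le_trans (norm_nonneg _) hδ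
    have h2 : (0:ℝ) < ε ^ (q + n + m + 1) := pow_pos hε0 _
    nlinarith
  set a := x ε with ha
  set b := x' ε with hb
  set c : ℝ := (ε ^ n : ℝ)⁻¹ with hc
  have hc0 : 0 ≤ c := by positivity
  set M : (Fin n → ℝ) →L[ℝ] (Fin n → ℝ) :=
    (-(ε⁻¹)) • ContinuousLinearMap.id ℝ (Fin n → ℝ) with hM
  set Θ : (Fin n → ℝ) → ℂ := fun w => c • φ (M w) with hΘ
  have hΘS : ContDiff ℝ (⊤ : ℕ∞) Θ := ((φ.smooth ⊤).comp M.contDiff).const_smul c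
  -- norm of M
  have hMnorm : ‖M‖ ≤ ε⁻¹ := by
    rw [hM]
    refine le_trans (ContinuousLinearMap.opNorm_smul_le _ _) ?_
    rw [norm_neg, Real.norm_of_nonneg (le_of_lt (inv_pos.2 hε0))]
    calc ε⁻¹ * ‖ContinuousLinearMap.id ℝ (Fin n → ℝ)‖ ≤ ε⁻¹ * 1 := by
          exact mul_le_mul_of_nonneg_left (ContinuousLinearMap.norm_id_le)
            (le_of_lt (inv_pos.2 hε0))
      _ = ε⁻¹ := mul_one _
  -- bound on derivatives of Θ
  have hΘd : ∀ (k : ℕ) (w : Fin n → ℝ),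
      ‖iteratedFDeriv ℝ k Θ w‖ ≤ c * (Cφ k * ε⁻¹ ^ k) := by
    intro k w
    have hsm : ContDiff ℝ k (fun w => φ (M w)) :=
      ((φ.smooth ⊤).comp M.contDiff).of_le (le_infty k)
    have h1 : iteratedFDeriv ℝ k Θ w
        = c • iteratedFDeriv ℝ k (fun w => φ (M w)) w :=
      iteratedFDeriv_const_smul_apply' hsm.contDiffAt
    rw [h1]
    refine le_trans (ContinuousMultilinearMap.opNorm_smul_le c _) ?_
    rw [Real.norm_of_nonneg hc0]
    refine mul_le_mul_of_nonneg_left ?_ hc0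
    have h2 : iteratedFDeriv ℝ k ((⇑φ) ∘ ⇑M) w
        = (iteratedFDeriv ℝ k (⇑φ) (M w)).compContinuousLinearMap fun _ => M :=
      M.iteratedFDeriv_comp_right (φ.smooth ⊤) w (le_infty k)
    have h3 : ‖iteratedFDeriv ℝ k (fun w => φ (M w)) w‖
        = ‖(iteratedFDeriv ℝ k (⇑φ) (M w)).compContinuousLinearMap fun _ => M‖ := by
      rw [← h2]; rfl
    rw [h3]
    refine le_trans (ContinuousMultilinearMap.norm_compContinuousLinearMap_le _ _) ?_
    calc ‖iteratedFDeriv ℝ k (⇑φ) (M w)‖ * ∏ _i : Fin k, ‖M‖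
        ≤ Cφ k * ∏ _i : Fin k, ε⁻¹ := by
          refine mul_le_mul (hCφ k (M w)) ?_ ?_ (le_of_lt (hCφ0 k))
          · exact Finset.prod_le_prod (fun _ _ => norm_nonneg _) (fun _ _ => hMnorm)
          · exact Finset.prod_nonneg fun _ _ => norm_nonneg _
      _ = Cφ k * ε⁻¹ ^ k := by rw [Finset.prod_const, Finset.card_univ, Fintype.card_fin]
  -- rewriting the dilated translates via Θ
  have hMz : ∀ p z : Fin n → ℝ, M (z + (-p)) = ε⁻¹ • (p - z) := by
    intro p z
    rw [hM]
    simp only [ContinuousLinearMap.smul_apply, ContinuousLinearMap.id_apply]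
    module
  have hinner : ∀ p : Fin n → ℝ, ContDiff ℝ (⊤ : ℕ∞) (fun z => c • φ (ε⁻¹ • (p - z))) :=
    fun p => (((φ.smooth ⊤).comp
      (((contDiff_const.sub contDiff_id)).const_smul ε⁻¹))).const_smul c
  set G : (Fin n → ℝ) → ℂ :=
    fun z => c • φ (ε⁻¹ • (a - z)) - c • φ (ε⁻¹ • (b - z)) with hG
  have hGS : ContDiff ℝ (⊤ : ℕ∞) G := (hinner a).sub (hinner b)
  have hFS : ContDiff ℝ (⊤ : ℕ∞) (fun z => (ψ z : ℂ) * G z) := hψcS.mul hGS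
  -- bound on derivatives of G
  have hGk : ∀ k : ℕ, ∀ w : Fin n → ℝ,
      ‖iteratedFDeriv ℝ k G w‖ ≤ c * (Cφ (k + 1) * ε⁻¹ ^ (k + 1)) * ‖a - b‖ := by
    intro k w
    have e1 : G = fun z => Θ (z + (-a)) - Θ (z + (-b)) := by
      funext z
      show c • φ (ε⁻¹ • (a - z)) - c • φ (ε⁻¹ • (b - z)) = Θ (z + -a) - Θ (z + -b)
      show c • φ (ε⁻¹ • (a - z)) - c • φ (ε⁻¹ • (b - z))
          = c • φ (M (z + -a)) - c • φ (M (z + -b))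
      rw [hMz a z, hMz b z]
    have hga : ContDiff ℝ (⊤ : ℕ∞) (fun z : Fin n → ℝ => Θ (z + (-a))) :=
      hΘS.comp (contDiff_id.add contDiff_const)
    have hgb : ContDiff ℝ (⊤ : ℕ∞) (fun z : Fin n → ℝ => Θ (z + (-b))) :=
      hΘS.comp (contDiff_id.add contDiff_const)
    have e4 : (fun z : Fin n → ℝ => Θ (z + (-a)) - Θ (z + (-b)))
        = fun z : Fin n → ℝ => Θ (z + (-a)) + -Θ (z + (-b)) := by
      funext z
      rw [sub_eq_add_neg]
    have e2 : iteratedFDeriv ℝ k G w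
        = iteratedFDeriv ℝ k (fun z => Θ (z + (-a))) w
          - iteratedFDeriv ℝ k (fun z => Θ (z + (-b))) w := by
      rw [e1, e4, iteratedFDeriv_add_apply' (hga.of_le (le_infty k)).contDiffAt
        ((hgb.of_le (le_infty k)).neg).contDiffAt,
        show (fun z : Fin n → ℝ => -Θ (z + (-b)))
          = -(fun z : Fin n → ℝ => Θ (z + (-b))) from rfl,
        iteratedFDeriv_neg_apply, ← sub_eq_add_neg]
    rw [e2, itF_comp_add hΘS (-a) k, itF_comp_add hΘS (-b) k]
    have := itF_lipschitz hΘS k (fun w => hΘd (k + 1) w) (w + (-a)) (w + (-b))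
    calc ‖iteratedFDeriv ℝ k Θ (w + -a) - iteratedFDeriv ℝ k Θ (w + -b)‖
        ≤ c * (Cφ (k + 1) * ε⁻¹ ^ (k + 1)) * ‖(w + -a) - (w + -b)‖ := this
      _ = c * (Cφ (k + 1) * ε⁻¹ ^ (k + 1)) * ‖a - b‖ := by
          congr 1
          rw [show (w + -a) - (w + -b) = b - a by module, norm_sub_rev]
  -- power bookkeeping
  have hpow : ∀ j : ℕ, j ≤ m → c * ε⁻¹ ^ (m - j + 1) * ε ^ (q + n + m + 1) = ε ^ q * ε ^ j := by
    intro j hj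
    have key : (ε ^ n) * (ε ^ (m - j + 1)) * (ε ^ q * ε ^ j) = ε ^ (q + n + m + 1) := by
      rw [← pow_add, ← pow_add, ← pow_add]
      congr 1
      omega
    rw [hc, inv_pow, ← key]
    field_simp
  -- per-term estimate
  have hterm : ∀ j ∈ Finset.range (m + 1),
      (m.choose j : ℝ) * ‖iteratedFDeriv ℝ j (fun w => (ψ w : ℂ)) y‖ *
          ‖iteratedFDeriv ℝ (m - j) G y‖
        ≤ (m.choose j : ℝ) * Cψ j * (Cφ (m - j + 1) * C') * ε ^ q := by
    intro j hj
    have hjm : j ≤ m := Nat.lt_succ_iff.mp (Finset.mem_range.mp hj)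
    have hCψ0 : 0 ≤ Cψ j := le_trans (norm_nonneg _) (hCψ j y)
    have h2 : ‖iteratedFDeriv ℝ (m - j) G y‖ ≤ Cφ (m - j + 1) * C' * ε ^ q := by
      refine le_trans (hGk (m - j) y) ?_
      calc c * (Cφ (m - j + 1) * ε⁻¹ ^ (m - j + 1)) * ‖a - b‖
          ≤ c * (Cφ (m - j + 1) * ε⁻¹ ^ (m - j + 1)) * (C' * ε ^ (q + n + m + 1)) := by
            refine mul_le_mul_of_nonneg_left hδ ?_
            exact mul_nonneg hc0 (mul_nonneg (le_of_lt (hCφ0 _)) (by positivity))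
        _ = Cφ (m - j + 1) * C' * (c * ε⁻¹ ^ (m - j + 1) * ε ^ (q + n + m + 1)) := by ring
        _ = Cφ (m - j + 1) * C' * (ε ^ q * ε ^ j) := by rw [hpow j hjm]
        _ ≤ Cφ (m - j + 1) * C' * (ε ^ q * 1) := by
            refine mul_le_mul_of_nonneg_left ?_
              (mul_nonneg (le_of_lt (hCφ0 _)) hC'0)
            refine mul_le_mul_of_nonneg_left ?_ (by positivity)
            exact pow_le_one₀ (le_of_lt hε0) hε1
        _ = Cφ (m - j + 1) * C' * ε ^ q := by ring
    calc (m.choose j : ℝ) * ‖iteratedFDeriv ℝ j (fun w => (ψ w : ℂ)) y‖ *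
          ‖iteratedFDeriv ℝ (m - j) G y‖
        ≤ (m.choose j : ℝ) * Cψ j * (Cφ (m - j + 1) * C' * ε ^ q) := by
          refine mul_le_mul ?_ h2 (norm_nonneg _) (by positivity)
          exact mul_le_mul_of_nonneg_left (hCψ j y) (by positivity)
      _ = (m.choose j : ℝ) * Cψ j * (Cφ (m - j + 1) * C') * ε ^ q := by ring
  -- main chain
  calc ‖pdm α (fun z => (ψ z : ℂ) * ((ε ^ n : ℝ)⁻¹ • φ (ε⁻¹ • (x ε - z)) -
            (ε ^ n : ℝ)⁻¹ • φ (ε⁻¹ • (x' ε - z)))) y‖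
      = ‖pdm α (fun z => (ψ z : ℂ) * G z) y‖ := rfl
    _ ≤ ‖iteratedFDeriv ℝ m (fun z => (ψ z : ℂ) * G z) y‖ := norm_pdm_le α _ hFS y
    _ ≤ ∑ j ∈ Finset.range (m + 1), (m.choose j : ℝ) *
          ‖iteratedFDeriv ℝ j (fun w => (ψ w : ℂ)) y‖ * ‖iteratedFDeriv ℝ (m - j) G y‖ :=
        norm_iteratedFDeriv_mul_le hψcS hGS y (le_infty m)
    _ ≤ ∑ j ∈ Finset.range (m + 1),
          (m.choose j : ℝ) * Cψ j * (Cφ (m - j + 1) * C') * ε ^ q :=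
        Finset.sum_le_sum hterm
    _ = (∑ j ∈ Finset.range (m + 1),
          (m.choose j : ℝ) * Cψ j * (Cφ (m - j + 1) * C')) * ε ^ q := by
        rw [Finset.sum_mul]
end
end

section
/- Let (u_ε)_{ε∈(0,1]} be a net of smooth functions on ℝ and suppose there exist c > 0, N ∈ ℕ and η₀ ∈ (0,1] such that sup_{x∈ℝ}(1+|x|)|u_ε(x)| ≤ c ε^{-N} for all ε ∈ (0,η₀]. Then for every q ∈ ℕ there exist c' > 0 and η ∈ (0,η₀] such that for all integers m ≥ q + N and all ε ∈ (0,η]: |Σ_{n=q+N}^{m} u_ε(ε^{-n})| ≤ c' ε^q. In particular the sequence of partial sums (Σ_{n=0}^{m} u_ε(ε^{-n}))_m is Cauchy with respect to the asymptotic valuation on nets of complex numbers. -/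
open MeasureTheory
open scoped ENNReal

noncomputable section

lemma geom2 (ε : ℝ) (h0 : 0 ≤ ε) (h : ε ≤ 1/2) (n : ℕ) :
    ∑ j ∈ Finset.range n, ε ^ j ≤ 2 := by
  calc ∑ j ∈ Finset.range n, ε ^ j ≤ ∑ j ∈ Finset.range n, (1/2:ℝ) ^ j := by
        apply Finset.sum_le_sum; intro j _; exact pow_le_pow_left₀ h0 h j
    _ ≤ 2 := by
        rw [geom_sum_eq (by norm_num), div_le_iff_of_neg (by norm_num)]
        have : (0:ℝ) ≤ (1/2:ℝ)^n := by positivity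
        nlinarith

lemma tailbd (u : ℝ → ℝ → ℂ) (c : ℝ) (hc : 0 < c) (N : ℕ) (η₀ : ℝ) (hη₀ : 0 < η₀)
    (hu : ∀ ε : ℝ, 0 < ε → ε ≤ η₀ → ∀ x : ℝ, (1 + |x|) * ‖u ε x‖ ≤ c * ε ^ (-(N : ℤ)))
    (q : ℕ) (m : ℕ) (hm : q + N ≤ m) (ε : ℝ) (hε : 0 < ε) (hεη : ε ≤ min η₀ (1/2)) :
    ‖∑ k ∈ Finset.Icc (q + N) m, u ε (ε ^ k)⁻¹‖ ≤ (2 * c) * ε ^ q := by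
  have hεη₀ : ε ≤ η₀ := le_trans hεη (min_le_left _ _)
  have hεh : ε ≤ 1/2 := le_trans hεη (min_le_right _ _)
  have key : ∀ k : ℕ, N ≤ k → ‖u ε (ε ^ k)⁻¹‖ ≤ c * ε ^ (k - N) := by
    intro k hk
    have h1 := hu ε hε hεη₀ (ε ^ k)⁻¹
    have hpow : (0:ℝ) < ε ^ k := by positivity
    have h2 : (ε ^ k)⁻¹ * ‖u ε (ε ^ k)⁻¹‖ ≤ c * ε ^ (-(N : ℤ)) := by
      refine le_trans ?_ h1
      have : (ε ^ k)⁻¹ ≤ 1 + |(ε ^ k)⁻¹| := by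
        rw [abs_of_pos (by positivity)]; linarith
      exact mul_le_mul_of_nonneg_right this (norm_nonneg _)
    have h3 : ‖u ε (ε ^ k)⁻¹‖ ≤ c * ε ^ (-(N : ℤ)) * ε ^ k := by
      rw [← le_div_iff₀' (by positivity)] at h2
      calc ‖u ε (ε ^ k)⁻¹‖ ≤ c * ε ^ (-(N : ℤ)) / (ε ^ k)⁻¹ := h2
        _ = c * ε ^ (-(N : ℤ)) * ε ^ k := by field_simp
    calc ‖u ε (ε ^ k)⁻¹‖ ≤ c * ε ^ (-(N : ℤ)) * ε ^ k := h3
      _ = c * ε ^ (k - N) := by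
          rw [zpow_neg, zpow_natCast, pow_sub₀ ε hε.ne' hk]
          ring
  calc ‖∑ k ∈ Finset.Icc (q + N) m, u ε (ε ^ k)⁻¹‖
      ≤ ∑ k ∈ Finset.Icc (q + N) m, ‖u ε (ε ^ k)⁻¹‖ := norm_sum_le _ _
    _ ≤ ∑ k ∈ Finset.Icc (q + N) m, c * ε ^ (k - N) := by
        apply Finset.sum_le_sum; intro k hk
        exact key k (le_trans (Nat.le_add_left N q) (Finset.mem_Icc.mp hk).1)
    _ = c * ∑ k ∈ Finset.Icc (q + N) m, ε ^ (k - N) := by rw [Finset.mul_sum]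
    _ ≤ (2 * c) * ε ^ q := by
        have hre : ∑ k ∈ Finset.Icc (q + N) m, ε ^ (k - N)
            = ε ^ q * ∑ j ∈ Finset.range (m + 1 - (q + N)), ε ^ j := by
          rw [Finset.mul_sum, ← Finset.Ico_add_one_right_eq_Icc, Finset.sum_Ico_eq_sum_range]
          apply Finset.sum_congr rfl
          intro j _
          rw [← pow_add]
          congr 1
          omega
        rw [hre, ← mul_assoc, mul_comm c (ε ^ q), mul_assoc, mul_comm (2*c) (ε^q)]
        apply mul_le_mul_of_nonneg_left _ (by positivity)
        calc c * ∑ j ∈ Finset.range (m + 1 - (q + N)), ε ^ j ≤ c * 2 := by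
              exact mul_le_mul_of_nonneg_left (geom2 ε hε.le hεh _) hc.le
          _ = 2 * c := by ring

/-- if `(1+|x|)|u_ε(x)| ≤ c ε^{-N}` then the tails
`Σ_{n=q+N}^m u_ε(ε^{-n})` are `O(ε^q)`, so the partial sums `Σ_{n≤m} u_ε(ε^{-n})` form a
Cauchy sequence for the asymptotic valuation. -/
theorem stmt12 (u : ℝ → ℝ → ℂ)
    (hsmooth : ∀ ε ∈ Set.Ioc (0 : ℝ) 1, ContDiff ℝ (⊤ : ℕ∞) (u ε))
    (c : ℝ) (hc : 0 < c) (N : ℕ) (η₀ : ℝ) (hη₀ : 0 < η₀) (hη₀1 : η₀ ≤ 1)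
    (hu : ∀ ε : ℝ, 0 < ε → ε ≤ η₀ → ∀ x : ℝ, (1 + |x|) * ‖u ε x‖ ≤ c * ε ^ (-(N : ℤ))) :
    (∀ q : ℕ, ∃ c' : ℝ, 0 < c' ∧ ∃ η : ℝ, 0 < η ∧ η ≤ η₀ ∧
      ∀ m : ℕ, q + N ≤ m → ∀ ε : ℝ, 0 < ε → ε ≤ η →
        ‖∑ k ∈ Finset.Icc (q + N) m, u ε (ε ^ k)⁻¹‖ ≤ c' * ε ^ q) ∧
    (∀ q : ℕ, ∃ M : ℕ, ∀ m m' : ℕ, M ≤ m → M ≤ m' → ∃ C : ℝ, EvSmall fun ε =>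
      ‖(∑ k ∈ Finset.range (m + 1), u ε (ε ^ k)⁻¹) -
          ∑ k ∈ Finset.range (m' + 1), u ε (ε ^ k)⁻¹‖ ≤ C * ε ^ q) := by
  constructor
  · intro q
    refine ⟨2 * c, by linarith, min η₀ (1/2), lt_min hη₀ (by norm_num), min_le_left _ _, ?_⟩
    intro m hm ε hε hεη
    exact tailbd u c hc N η₀ hη₀ hu q m hm ε hε hεη
  · intro q
    refine ⟨q + N, ?_⟩
    intro m m' hmM hm'M
    refine ⟨2 * (2 * c), min η₀ (1/2), lt_min hη₀ (by norm_num),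
      le_trans (min_le_right _ _) (by norm_num), ?_⟩
    intro ε hε hεη
    have hsplit : ∀ n : ℕ, q + N ≤ n →
        ∑ k ∈ Finset.range (n + 1), u ε (ε ^ k)⁻¹
          = (∑ k ∈ Finset.range (q + N), u ε (ε ^ k)⁻¹)
            + ∑ k ∈ Finset.Icc (q + N) n, u ε (ε ^ k)⁻¹ := by
      intro n hn
      rw [← Finset.Ico_add_one_right_eq_Icc,
        Finset.sum_range_add_sum_Ico _ (by omega : q + N ≤ n + 1)]
    rw [hsplit m hmM, hsplit m' hm'M]
    have h1 := tailbd u c hc N η₀ hη₀ hu q m hmM ε hε hεη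
    have h2 := tailbd u c hc N η₀ hη₀ hu q m' hm'M ε hε hεη
    calc ‖((∑ k ∈ Finset.range (q + N), u ε (ε ^ k)⁻¹)
            + ∑ k ∈ Finset.Icc (q + N) m, u ε (ε ^ k)⁻¹)
          - ((∑ k ∈ Finset.range (q + N), u ε (ε ^ k)⁻¹)
            + ∑ k ∈ Finset.Icc (q + N) m', u ε (ε ^ k)⁻¹)‖
        = ‖(∑ k ∈ Finset.Icc (q + N) m, u ε (ε ^ k)⁻¹)
            - ∑ k ∈ Finset.Icc (q + N) m', u ε (ε ^ k)⁻¹‖ := by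
          congr 1; ring
      _ ≤ ‖∑ k ∈ Finset.Icc (q + N) m, u ε (ε ^ k)⁻¹‖
            + ‖∑ k ∈ Finset.Icc (q + N) m', u ε (ε ^ k)⁻¹‖ := norm_sub_le _ _
      _ ≤ 2 * c * ε ^ q + 2 * c * ε ^ q := add_le_add h1 h2
      _ = 2 * (2 * c) * ε ^ q := by ring
end
end
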